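/- arXiv:1503.06883 — 4 statements merged into one kernel-verified Lean document; each statement's English description precedes it below -/
import Mathlib

section
/- If M = D - A is a symmetric diagonally dominant M-matrix (symmetric positive definite with non-positive off-diagonal entries and diagonal dominance), where D is the positive diagonal part and A is the non-negative symmetric off-diagonal part, then D - A D⁻¹ A is also a symmetric diagonally dominant M-matrix. -/
/-!
For `A ≥ 0` entrywise, `xᵀ(D + A)x ≥ |x|ᵀ(D - A)|x|`, so `D + A` is positive definite along with
`M = D - A`. With `y = D⁻¹Ax`, symmetry gives `yᵀDy = xᵀAy` and hence
`2 xᵀ(D - AD⁻¹A)x = (x - y)ᵀ(D + A)(x - y) + (x + y)ᵀ(D - A)(x + y)`, which vanishes only at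
`x = 0`. The product `AD⁻¹A` is entrywise non-negative, and diagonal dominance of `M` says
`A𝟙 ≤ D𝟙`, i.e. `D⁻¹A𝟙 ≤ 𝟙`; so the row sums of `AD⁻¹A` are at most those of `A`, hence at most
those of `D`.
-/

/-- An SDDM matrix: symmetric positive definite, non-positive off-diagonal entries,
and diagonally dominant. -/
def IsSDDM {n : ℕ} (M : Matrix (Fin n) (Fin n) ℝ) : Prop :=
  M.PosDef ∧ (∀ i j, i ≠ j → M i j ≤ 0) ∧
    (∀ i, -∑ j ∈ Finset.univ.erase i, M i j ≤ M i i)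

open Finset Matrix

namespace Matrix

variable {ι : Type*} [Fintype ι]

lemma dotProduct_mulVec_comm_of_isHermitian {S : Matrix ι ι ℝ} (hS : S.IsHermitian)
    (x y : ι → ℝ) : x ⬝ᵥ S *ᵥ y = y ⬝ᵥ S *ᵥ x := by
  rw [dotProduct_mulVec, ← mulVec_transpose, ← conjTranspose_eq_transpose_of_trivial, hS.eq,
    dotProduct_comm]

lemma neg_dotProduct_mulVec_abs_le {A : Matrix ι ι ℝ} (hA : ∀ i j, 0 ≤ A i j) (x : ι → ℝ) :
    -((fun i => |x i|) ⬝ᵥ A *ᵥ (fun i => |x i|)) ≤ x ⬝ᵥ A *ᵥ x := by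
  simp only [dotProduct, mulVec, mul_sum, ← sum_neg_distrib]
  refine sum_le_sum fun i _ => sum_le_sum fun j _ => ?_
  have := mul_le_mul_of_nonneg_left (neg_abs_le (x i * x j)) (hA i j)
  rw [abs_mul] at this
  linarith

lemma dotProduct_add_sub_polarization {D A : Matrix ι ι ℝ} (hD : D.IsHermitian)
    (hA : A.IsHermitian) (x y : ι → ℝ) :
    (x - y) ⬝ᵥ (D + A) *ᵥ (x - y) + (x + y) ⬝ᵥ (D - A) *ᵥ (x + y) =
      2 * (x ⬝ᵥ D *ᵥ x + y ⬝ᵥ D *ᵥ y - 2 * (x ⬝ᵥ A *ᵥ y)) := by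
  simp only [add_mulVec, sub_mulVec, mulVec_add, mulVec_sub, dotProduct_add, dotProduct_sub,
    add_dotProduct, sub_dotProduct]
  rw [dotProduct_mulVec_comm_of_isHermitian hD y x, dotProduct_mulVec_comm_of_isHermitian hA y x]
  ring

lemma neg_sum_erase_le_iff_mulVec_one_nonneg [DecidableEq ι] (M : Matrix ι ι ℝ) (i : ι) :
    -∑ j ∈ univ.erase i, M i j ≤ M i i ↔ 0 ≤ (M *ᵥ 1) i := by
  simp only [mulVec, dotProduct, Pi.one_apply, mul_one, ← add_sum_erase univ _ (mem_univ i)]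
  constructor <;> intro h <;> linarith

variable [DecidableEq ι]

lemma dotProduct_diagonal_mulVec_abs (d x : ι → ℝ) :
    (fun i => |x i|) ⬝ᵥ diagonal d *ᵥ (fun i => |x i|) = x ⬝ᵥ diagonal d *ᵥ x := by
  simp only [dotProduct, mulVec_diagonal]
  exact sum_congr rfl fun i _ => by rw [mul_left_comm, abs_mul_abs_self, mul_left_comm]

lemma PosDef.diagonal_add_of_diagonal_sub {d : ι → ℝ} {A : Matrix ι ι ℝ}
    (hM : (diagonal d - A).PosDef) (hA : ∀ i j, 0 ≤ A i j) : (diagonal d + A).PosDef := by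
  have hD : (diagonal d).IsHermitian := isHermitian_diagonal d
  have hAh : A.IsHermitian := by simpa using hD.sub hM.isHermitian
  refine PosDef.of_dotProduct_mulVec_pos (hD.add hAh) fun x hx => ?_
  have hx' : (fun i => |x i|) ≠ 0 := fun h => hx <| funext fun i => abs_eq_zero.1 (congrFun h i)
  have := hM.dotProduct_mulVec_pos hx'
  simp only [star_trivial, sub_mulVec, dotProduct_sub, add_mulVec, dotProduct_add,
    dotProduct_diagonal_mulVec_abs] at this ⊢
  linarith [neg_dotProduct_mulVec_abs_le hA x]

theorem PosDef.sub_mul_inv_mul {D A : Matrix ι ι ℝ} (hadd : (D + A).PosDef)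
    (hsub : (D - A).PosDef) : (D - A * D⁻¹ * A).PosDef := by
  have hDpos : D.PosDef := by
    simpa [smul_add, ← two_smul ℝ D] using (hadd.add hsub).smul (a := (2⁻¹ : ℝ)) (by norm_num)
  have hA : A.IsHermitian := by
    have h : ((2⁻¹ : ℝ) • ((D + A) - (D - A))).IsHermitian :=
      (IsSelfAdjoint.all _).smul (hadd.1.sub hsub.1)
    rwa [show (2⁻¹ : ℝ) • ((D + A) - (D - A)) = A by module] at h
  have hDinv : D * D⁻¹ = 1 := mul_nonsing_inv D ((isUnit_iff_isUnit_det D).1 hDpos.isUnit)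
  have hADA : (A * D⁻¹ * A).IsHermitian := by
    simpa only [hA.eq] using isHermitian_conjTranspose_mul_mul A hDpos.1.inv
  refine PosDef.of_dotProduct_mulVec_pos (hDpos.1.sub hADA) fun x hx => ?_
  set y := D⁻¹ *ᵥ A *ᵥ x
  have hDy : D *ᵥ y = A *ᵥ x := by rw [mulVec_mulVec, hDinv, one_mulVec]
  have hyDy : y ⬝ᵥ D *ᵥ y = x ⬝ᵥ A *ᵥ y := by
    rw [hDy, dotProduct_mulVec_comm_of_isHermitian hA]
  have hpolar : 2 * (x ⬝ᵥ (D - A * D⁻¹ * A) *ᵥ x) =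
      (x - y) ⬝ᵥ (D + A) *ᵥ (x - y) + (x + y) ⬝ᵥ (D - A) *ᵥ (x + y) := by
    rw [dotProduct_add_sub_polarization hDpos.isHermitian hA, sub_mulVec, dotProduct_sub,
      ← mulVec_mulVec, ← mulVec_mulVec, hyDy]
    ring
  have h₁ := hadd.posSemidef.dotProduct_mulVec_nonneg (x - y)
  have h₂ := hsub.posSemidef.dotProduct_mulVec_nonneg (x + y)
  simp only [star_trivial] at h₁ h₂ ⊢
  by_cases hxy : x - y = 0
  · have hxy' : x + y ≠ 0 := by
      rw [← sub_eq_zero.1 hxy, ← two_smul ℝ x]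
      exact smul_ne_zero two_ne_zero hx
    have := hsub.dotProduct_mulVec_pos hxy'
    simp only [star_trivial] at this
    linarith
  · have := hadd.dotProduct_mulVec_pos hxy
    simp only [star_trivial] at this
    linarith

variable {κ μ : Type*}

lemma mul_diagonal_mul_apply_nonneg {A : Matrix κ ι ℝ} {e : ι → ℝ} {B : Matrix ι μ ℝ}
    (hA : ∀ i j, 0 ≤ A i j) (he : ∀ i, 0 ≤ e i) (hB : ∀ i j, 0 ≤ B i j) (i : κ) (j : μ) :
    0 ≤ (A * diagonal e * B) i j := by
  rw [mul_apply]
  exact sum_nonneg fun k _ => by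
    rw [mul_diagonal]
    exact mul_nonneg (mul_nonneg (hA i k) (he k)) (hB k j)

lemma mul_diagonal_inv_mul_mulVec_one_le [Fintype μ] {A : Matrix κ ι ℝ} {d : ι → ℝ}
    {B : Matrix ι μ ℝ} (hA : ∀ i j, 0 ≤ A i j) (hd : ∀ i, 0 < d i) (hB : B *ᵥ 1 ≤ d) :
    (A * diagonal d⁻¹ * B) *ᵥ 1 ≤ A *ᵥ 1 := by
  intro i
  have hscaled : ∀ k, (diagonal d⁻¹ *ᵥ B *ᵥ 1) k ≤ 1 := fun k => by
    rw [mulVec_diagonal, Pi.inv_apply, inv_mul_le_one₀ (hd k)]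
    exact hB k
  calc ((A * diagonal d⁻¹ * B) *ᵥ 1) i = (A *ᵥ diagonal d⁻¹ *ᵥ B *ᵥ 1) i := by
        rw [mulVec_mulVec, mulVec_mulVec, Matrix.mul_assoc]
    _ ≤ (A *ᵥ 1) i := sum_le_sum fun k _ => mul_le_mul_of_nonneg_left (hscaled k) (hA i k)

end Matrix

/-- If `M = D - A` is SDDM with standard splitting, then `D - A D⁻¹ A` is SDDM. -/
theorem stmt0 {n : ℕ} (M D A : Matrix (Fin n) (Fin n) ℝ)
    (hM : IsSDDM M)
    (hD : D = Matrix.diagonal (fun i => M i i))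
    (hA : A = D - M) :
    IsSDDM (D - A * D⁻¹ * A) := by
  obtain ⟨hPD, hoff, hdom⟩ := hM
  set d : Fin n → ℝ := fun i => M i i
  have hd : ∀ i, 0 < d i := fun i => hPD.diag_pos
  have hM_eq : M = diagonal d - A := by rw [hA, hD, sub_sub_cancel]
  have hA_nonneg : ∀ i j, 0 ≤ A i j := fun i j => by
    rcases eq_or_ne i j with rfl | hij
    · simp [hA, hD, d]
    · simpa [hA, hD, hij] using hoff i j hij
  have hrow : A *ᵥ 1 ≤ d := fun i => by
    have := (neg_sum_erase_le_iff_mulVec_one_nonneg M i).1 (hdom i)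
    rw [hM_eq, sub_mulVec, Pi.sub_apply, mulVec_diagonal] at this
    simpa using this
  have hDinv : D⁻¹ = diagonal d⁻¹ := by
    rw [hD]
    refine inv_eq_right_inv ?_
    rw [diagonal_mul_diagonal, ← diagonal_one]
    exact congrArg diagonal (funext fun i => mul_inv_cancel₀ (hd i).ne')
  refine ⟨?_, fun i j hij => ?_, fun i => ?_⟩
  · rw [hM_eq] at hPD
    exact hD ▸ PosDef.sub_mul_inv_mul (hPD.diagonal_add_of_diagonal_sub hA_nonneg) hPD
  · rw [Matrix.sub_apply, hDinv, hD, diagonal_apply_ne _ hij, zero_sub, neg_nonpos]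
    exact mul_diagonal_mul_apply_nonneg hA_nonneg (fun k => (inv_pos.2 (hd k)).le) hA_nonneg i j
  · rw [neg_sum_erase_le_iff_mulVec_one_nonneg, sub_mulVec, hDinv, Pi.sub_apply, sub_nonneg]
    calc _ ≤ (A *ᵥ 1) i := mul_diagonal_inv_mul_mulVec_one_le hA_nonneg hd hrow i
      _ ≤ d i := hrow i
      _ = (D *ᵥ 1) i := by simp [hD, mulVec_diagonal, d]
end

section
/- Let M = D - A be an SDDM matrix with standard splitting, where D is positive diagonal and A is symmetric non-negative. Then (D - A)⁻¹ = (1/2)[D⁻¹ + (I + D⁻¹A)(D - A D⁻¹ A)⁻¹(I + A D⁻¹)]. -/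
namespace Matrix

variable {ι : Type*} [Fintype ι] [DecidableEq ι]

section Field

variable {K : Type*} [Field K] {D A : Matrix ι ι K}

theorem add_mul_inv_mul_sub_eq (hD : IsUnit D.det) :
    (D + A) * D⁻¹ * (D - A) = D - A * D⁻¹ * A := by
  rw [add_mul, mul_nonsing_inv D hD, add_mul, one_mul, mul_sub, mul_assoc A, nonsing_inv_mul D hD,
    mul_one]
  abel

theorem inv_sub_eq_half_smul [NeZero (2 : K)] (hD : IsUnit D.det)
    (hN : IsUnit (D - A * D⁻¹ * A).det) :
    (D - A)⁻¹ = (1 / 2 : K) •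
      (D⁻¹ + (1 + D⁻¹ * A) * (D - A * D⁻¹ * A)⁻¹ * (1 + A * D⁻¹)) := by
  have hfactor : (1 + A * D⁻¹) * (D - A) = D - A * D⁻¹ * A := by
    rw [← add_mul_inv_mul_sub_eq hD, add_mul D A, mul_nonsing_inv D hD]
  apply inv_eq_left_inv
  rw [smul_mul, add_mul, mul_assoc _ (1 + A * D⁻¹), hfactor, mul_assoc, nonsing_inv_mul _ hN,
    mul_one, mul_sub, nonsing_inv_mul D hD, sub_add_add_cancel, ← two_smul K, smul_smul,
    one_div, inv_mul_cancel₀ (NeZero.ne 2), one_smul]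

end Field

variable {R : Type*} [CommRing R] [LinearOrder R] [IsStrictOrderedRing R] [StarRing R]
  [TrivialStar R]

/-- Flipping the signs of the off-diagonal entries of a positive definite Z-matrix keeps it
positive definite. -/
theorem PosDef.two_nsmul_diagonal_diag_sub {M : Matrix ι ι R} (hM : M.PosDef)
    (hoff : ∀ i j, i ≠ j → M i j ≤ 0) : (2 • diagonal M.diag - M).PosDef := by
  have hherm : (2 • diagonal M.diag - M).IsHermitian := by
    rw [two_nsmul]
    exact (IsHermitian.add (isHermitian_diagonal _) (isHermitian_diagonal _)).sub hM.isHermitian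
  refine .of_dotProduct_mulVec_pos hherm fun x hx => ?_
  calc 0 < star |x| ⬝ᵥ M *ᵥ |x| := hM.dotProduct_mulVec_pos (by simpa using hx)
    _ ≤ star x ⬝ᵥ (2 • diagonal M.diag - M) *ᵥ x := by
      simp only [star_trivial, dot_mulVec_eq_sum_sum]
      refine Finset.sum_le_sum fun j _ => Finset.sum_le_sum fun i _ => ?_
      rcases eq_or_ne i j with rfl | hij
      · simp only [sub_apply, smul_apply, diagonal_apply_eq, diag_apply, Pi.abs_apply]
        rw [two_nsmul, add_sub_cancel_right, mul_right_comm, abs_mul_abs_self]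
        exact (mul_right_comm _ _ _).le
      · simp only [sub_apply, smul_apply, diagonal_apply_ne _ hij, smul_zero, zero_sub,
          Pi.abs_apply]
        nlinarith [neg_abs_le (x i * x j), abs_mul (x i) (x j), hoff i j hij]

end Matrix

/-- For an SDDM matrix `M = D - A` with standard splitting,
`(D - A)⁻¹ = (1/2)[D⁻¹ + (I + D⁻¹A)(D - A D⁻¹ A)⁻¹(I + A D⁻¹)]`. -/
theorem stmt1 {n : ℕ} (M D A : Matrix (Fin n) (Fin n) ℝ)
    (hM : IsSDDM M)
    (hD : D = Matrix.diagonal (fun i => M i i))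
    (hA : A = D - M) :
    (D - A)⁻¹ = (1/2 : ℝ) •
      (D⁻¹ + (1 + D⁻¹ * A) * (D - A * D⁻¹ * A)⁻¹ * (1 + A * D⁻¹)) := by
  obtain ⟨hMpos, hoff, -⟩ := hM
  have hDpos : D.PosDef := hD ▸ Matrix.posDef_diagonal_iff.mpr fun _ => hMpos.diag_pos
  have hDsub : D - A = M := by rw [hA, sub_sub_cancel]
  have hDadd : (D + A).PosDef := by
    have hsplit : D + A = 2 • Matrix.diagonal M.diag - M := by
      rw [hA, hD, two_nsmul, add_sub_assoc]
      rfl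
    exact hsplit ▸ hMpos.two_nsmul_diagonal_diag_sub hoff
  have hDdet : IsUnit D.det := hDpos.det_pos.ne'.isUnit
  refine Matrix.inv_sub_eq_half_smul hDdet ?_
  rw [← Matrix.add_mul_inv_mul_sub_eq hDdet, ← Matrix.isUnit_iff_isUnit_det, hDsub]
  exact (hDadd.isUnit.mul hDpos.inv.isUnit).mul hMpos.isUnit
end

section
/- Let M₀ = D₀ − A₀ be an SDDM matrix with standard splitting. Suppose 0 < γI ⪯ M₀ and the matrices of the chain satisfy, for i = 1,…,d: Dᵢ − Aᵢ ≈_{εᵢ₋₁} Dᵢ₋₁ − Aᵢ₋₁Dᵢ₋₁⁻¹Aᵢ₋₁, Dᵢ ≈_{εᵢ₋₁} Dᵢ₋₁, and D_d ≈_{ε_d} D_d − A_d. Then the operator Z₀ defined by the recursion x_d = D_d⁻¹ b_d and xᵢ = (1/2)[Dᵢ⁻¹bᵢ + (I + Dᵢ⁻¹Aᵢ)x_{i+1}] with bᵢ = (I + Aᵢ₋₁Dᵢ₋₁⁻¹)bᵢ₋₁ satisfies Z₀ ≈_{∑_{i=0}^{d} εᵢ} M₀⁻¹. -/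
open Matrix

/-- Loewner order: `X ⪯ Y` iff `Y - X` is positive semidefinite. -/
def LoewnerLE {n : ℕ} (X Y : Matrix (Fin n) (Fin n) ℝ) : Prop := (Y - X).PosSemidef

/-- `X ≈_α Y` iff `e^{-α} X ⪯ Y ⪯ e^{α} X` in the Loewner order. -/
def ApproxA {n : ℕ} (α : ℝ) (X Y : Matrix (Fin n) (Fin n) ℝ) : Prop :=
  LoewnerLE (Real.exp (-α) • X) Y ∧ LoewnerLE Y (Real.exp α • X)

/-!
Write `M = D - A` and `S = D - A D⁻¹ A = (D - A) D⁻¹ (D + A)`. The identity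
`(D - A)⁻¹ = ½ (D⁻¹ + (I + D⁻¹A) S⁻¹ (I + AD⁻¹))` shows that one step of the recursion turns an
approximation of `S⁻¹` into one of `M⁻¹` with the same error, because `≈_α` is preserved by
congruence `X ↦ C X Cᵀ`, by adding a positive semidefinite matrix and by positive scaling.
The chain hypothesis `Mᵢ₊₁ ≈_{εᵢ} Sᵢ` passes to inverses, so errors add up along the chain,
starting from `Z_d = D_d⁻¹ ≈_{ε_d} M_d⁻¹`.
-/

theorem Matrix.inv_sub_eq_half_smul_s7 {m K : Type*} [Fintype m] [DecidableEq m] [Field K]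
    [NeZero (2 : K)] {D A : Matrix m m K} (hD : IsUnit D.det)
    (hS : IsUnit (D - A * D⁻¹ * A).det) :
    (D - A)⁻¹ = (1 / 2 : K) • (D⁻¹ + (1 + D⁻¹ * A) * (D - A * D⁻¹ * A)⁻¹ * (1 + A * D⁻¹)) := by
  have hDD : D * D⁻¹ = 1 := D.mul_nonsing_inv hD
  have hfactor : (D - A) * (1 + D⁻¹ * A) = D - A * D⁻¹ * A := by
    rw [Matrix.mul_add, Matrix.mul_one, Matrix.sub_mul, ← Matrix.mul_assoc, ← Matrix.mul_assoc,
      hDD, Matrix.one_mul]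
    abel
  refine inv_eq_right_inv ?_
  rw [Matrix.mul_smul, Matrix.mul_add, ← Matrix.mul_assoc, ← Matrix.mul_assoc, hfactor,
    Matrix.mul_nonsing_inv _ hS, Matrix.one_mul, Matrix.sub_mul, hDD, sub_add_add_cancel,
    ← two_smul K, smul_smul, one_div, inv_mul_cancel₀ two_ne_zero, one_smul]

section

variable {n : ℕ}

namespace LoewnerLE

variable {X Y W : Matrix (Fin n) (Fin n) ℝ}

theorem trans (h₁ : LoewnerLE X Y) (h₂ : LoewnerLE Y W) : LoewnerLE X W := by
  unfold LoewnerLE at *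
  simpa only [sub_add_sub_cancel] using h₂.add h₁

theorem smul {c : ℝ} (hc : 0 ≤ c) (h : LoewnerLE X Y) : LoewnerLE (c • X) (c • Y) := by
  unfold LoewnerLE at *
  simpa only [smul_sub] using h.smul hc

theorem add_left (h : LoewnerLE X Y) (W : Matrix (Fin n) (Fin n) ℝ) :
    LoewnerLE (W + X) (W + Y) := by
  unfold LoewnerLE at *
  simpa only [add_sub_add_left_eq_sub] using h

theorem add_right (h : LoewnerLE X Y) (W : Matrix (Fin n) (Fin n) ℝ) :
    LoewnerLE (X + W) (Y + W) := by
  unfold LoewnerLE at *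
  simpa only [add_sub_add_right_eq_sub] using h

theorem smul_right_of_le (hW : W.PosSemidef) {a b : ℝ} (hab : a ≤ b) :
    LoewnerLE (a • W) (b • W) := by
  unfold LoewnerLE
  simpa only [← sub_smul] using hW.smul (sub_nonneg.mpr hab)

theorem mul_mul_transpose (h : LoewnerLE X Y) (C : Matrix (Fin n) (Fin n) ℝ) :
    LoewnerLE (C * X * Cᵀ) (C * Y * Cᵀ) := by
  unfold LoewnerLE at *
  simpa only [conjTranspose_eq_transpose_of_trivial, Matrix.mul_sub, Matrix.sub_mul] using
    h.mul_mul_conjTranspose_same C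

theorem posDef (hX : X.PosDef) (h : LoewnerLE X Y) : Y.PosDef := by
  simpa only [sub_add_cancel] using PosDef.posSemidef_add h hX

theorem inv_antitone (hX : X.PosDef) (h : LoewnerLE X Y) : LoewnerLE Y⁻¹ X⁻¹ := by
  have hY := h.posDef hX
  have hXX : X * X⁻¹ = 1 := X.mul_nonsing_inv hX.det_pos.ne'.isUnit
  have hdecomp : (X⁻¹ - Y⁻¹) * X * (X⁻¹ - Y⁻¹)ᵀ + Y⁻¹ * (Y - X) * Y⁻¹ᵀ = X⁻¹ - Y⁻¹ := by
    rw [transpose_sub, ← conjTranspose_eq_transpose_of_trivial,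
      ← conjTranspose_eq_transpose_of_trivial, hX.inv.isHermitian.eq, hY.inv.isHermitian.eq]
    simp only [Matrix.sub_mul, Matrix.mul_sub, X.nonsing_inv_mul hX.det_pos.ne'.isUnit,
      Y.nonsing_inv_mul hY.det_pos.ne'.isUnit, Matrix.mul_assoc Y⁻¹ X X⁻¹, hXX, Matrix.one_mul,
      Matrix.mul_one]
    abel
  unfold LoewnerLE
  rw [← hdecomp]
  exact (hX.posSemidef.mul_mul_conjTranspose_same _).add (h.mul_mul_conjTranspose_same _)

end LoewnerLE

namespace ApproxA

variable {α β : ℝ} {X Y W : Matrix (Fin n) (Fin n) ℝ}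

theorem trans (h₁ : ApproxA α X Y) (h₂ : ApproxA β Y W) : ApproxA (α + β) X W := by
  refine ⟨?_, ?_⟩
  · rw [neg_add, Real.exp_add, mul_comm, ← smul_smul]
    exact (h₁.1.smul (Real.exp_nonneg (-β))).trans h₂.1
  · rw [Real.exp_add, mul_comm, ← smul_smul]
    exact h₂.2.trans (h₁.2.smul (Real.exp_nonneg β))

theorem posDef (hX : X.PosDef) (h : ApproxA α X Y) : Y.PosDef :=
  h.1.posDef (hX.smul (Real.exp_pos _))

theorem inv (hX : X.PosDef) (h : ApproxA α X Y) : ApproxA α X⁻¹ Y⁻¹ := by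
  have exp_smul_inv (a : ℝ) : (Real.exp a • X)⁻¹ = Real.exp (-a) • X⁻¹ :=
    inv_eq_left_inv <| by
      rw [smul_mul_smul_comm, X.nonsing_inv_mul hX.det_pos.ne'.isUnit, ← Real.exp_add,
        neg_add_cancel, Real.exp_zero, one_smul]
  refine ⟨?_, ?_⟩
  · simpa only [exp_smul_inv] using h.2.inv_antitone (h.posDef hX)
  · simpa only [exp_smul_inv, neg_neg] using
      h.1.inv_antitone (hX.smul (Real.exp_pos (-α)))

theorem mul_mul_transpose (h : ApproxA α X Y) (C : Matrix (Fin n) (Fin n) ℝ) :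
    ApproxA α (C * X * Cᵀ) (C * Y * Cᵀ) := by
  refine ⟨?_, ?_⟩
  · simpa only [Matrix.mul_smul, Matrix.smul_mul] using h.1.mul_mul_transpose C
  · simpa only [Matrix.mul_smul, Matrix.smul_mul] using h.2.mul_mul_transpose C

theorem add_posSemidef (hα : 0 ≤ α) (hW : W.PosSemidef) (h : ApproxA α X Y) :
    ApproxA α (W + X) (W + Y) := by
  have hlower : LoewnerLE (Real.exp (-α) • W) W := by
    simpa only [one_smul] using LoewnerLE.smul_right_of_le hW
      (Real.exp_le_one_iff.mpr (neg_nonpos.mpr hα))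
  have hupper : LoewnerLE W (Real.exp α • W) := by
    simpa only [one_smul] using LoewnerLE.smul_right_of_le hW (Real.one_le_exp hα)
  rw [ApproxA, smul_add, smul_add]
  exact ⟨(hlower.add_right _).trans (h.1.add_left W), (h.2.add_left W).trans (hupper.add_right _)⟩

theorem smul {c : ℝ} (hc : 0 ≤ c) (h : ApproxA α X Y) : ApproxA α (c • X) (c • Y) := by
  refine ⟨?_, ?_⟩
  · simpa only [smul_comm c] using h.1.smul hc
  · simpa only [smul_comm c] using h.2.smul hc

end ApproxA

theorem ApproxA.half_recursion_inv_sub {D A M Z : Matrix (Fin n) (Fin n) ℝ} {α ε : ℝ}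
    (hD : D.PosDef) (hA : Aᵀ = A) (hM : M.PosDef) (hMS : ApproxA ε M (D - A * D⁻¹ * A))
    (hZ : ApproxA α Z M⁻¹) (hεα : 0 ≤ ε + α) :
    ApproxA (ε + α) ((1 / 2 : ℝ) • (D⁻¹ + (1 + D⁻¹ * A) * Z * (1 + A * D⁻¹))) (D - A)⁻¹ := by
  have hS : (D - A * D⁻¹ * A).PosDef := hMS.posDef hM
  have hC : (1 + D⁻¹ * A)ᵀ = 1 + A * D⁻¹ := by
    rw [transpose_add, transpose_one, transpose_mul, hA, ← conjTranspose_eq_transpose_of_trivial,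
      hD.inv.isHermitian.eq]
  have hZS : ApproxA (ε + α) Z (D - A * D⁻¹ * A)⁻¹ := add_comm α ε ▸ hZ.trans (hMS.inv hM)
  rw [inv_sub_eq_half_smul_s7 hD.det_pos.ne'.isUnit hS.det_pos.ne'.isUnit]
  have hsum := (hZS.mul_mul_transpose (1 + D⁻¹ * A)).add_posSemidef hεα hD.inv.posSemidef
  rw [hC] at hsum
  exact hsum.smul (by norm_num)

end

theorem stmt7_general {n : ℕ} (d : ℕ)
    (D A : ℕ → Matrix (Fin n) (Fin n) ℝ) (ε : ℕ → ℝ)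
    (Z : ℕ → Matrix (Fin n) (Fin n) ℝ)
    (hSDDM : ∀ i ≤ d, IsSDDM (D i - A i))
    (hDdiag : ∀ i ≤ d, ∃ f : Fin n → ℝ, (∀ k, 0 < f k) ∧ D i = Matrix.diagonal f)
    (hAsym : ∀ i ≤ d, (A i)ᵀ = A i ∧ ∀ k l, 0 ≤ A i k l)
    (hεpos : ∀ i ≤ d, 0 ≤ ε i)
    (hchain1 : ∀ i, 1 ≤ i → i ≤ d →
      ApproxA (ε (i-1)) (D i - A i) (D (i-1) - A (i-1) * (D (i-1))⁻¹ * A (i-1)))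
    (hchain3 : ApproxA (ε d) (D d) (D d - A d))
    (hZd : Z d = (D d)⁻¹)
    (hZ : ∀ i < d, Z i = (1/2 : ℝ) •
      ((D i)⁻¹ + (1 + (D i)⁻¹ * A i) * Z (i+1) * (1 + A i * (D i)⁻¹))) :
    ApproxA (∑ i ∈ Finset.range (d+1), ε i) (Z 0) ((D 0 - A 0)⁻¹) := by
  have hD (i : ℕ) (hi : i ≤ d) : (D i).PosDef := by
    obtain ⟨f, hf, hDf⟩ := hDdiag i hi
    exact hDf ▸ posDef_diagonal_iff.mpr hf
  have tail_sum_nonneg (i : ℕ) : 0 ≤ ∑ j ∈ Finset.Ico i (d + 1), ε j :=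
    Finset.sum_nonneg fun j hj => hεpos j (Nat.lt_succ_iff.mp (Finset.mem_Ico.mp hj).2)
  have tail_approx (i : ℕ) (hi : i ≤ d) :
      ApproxA (∑ j ∈ Finset.Ico i (d + 1), ε j) (Z i) (D i - A i)⁻¹ := by
    induction hi using Nat.decreasingInduction with
    | self => simpa only [Nat.Ico_succ_singleton, Finset.sum_singleton, hZd] using
        hchain3.inv (hD d le_rfl)
    | of_succ i hid ih =>
      have hchain := hchain1 (i + 1) (Nat.le_add_left 1 i) hid
      rw [Nat.add_sub_cancel] at hchain
      have hnonneg := tail_sum_nonneg i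
      rw [Finset.sum_eq_sum_Ico_succ_bot (Nat.lt_succ_of_lt hid)] at hnonneg ⊢
      rw [hZ i hid]
      exact hchain.half_recursion_inv_sub (hD i hid.le) (hAsym i hid.le).1 (hSDDM (i + 1) hid).1
        ih hnonneg
  simpa only [Finset.range_eq_Ico] using tail_approx 0 (Nat.zero_le d)

/-- Given an inverse approximated chain, the operator `Z₀` defined by the
ParallelRSolve recursion satisfies `Z₀ ≈_{∑ εᵢ} M₀⁻¹`. -/
theorem stmt7 {n : ℕ} (d : ℕ)
    (D A : ℕ → Matrix (Fin n) (Fin n) ℝ) (ε : ℕ → ℝ)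
    (Z : ℕ → Matrix (Fin n) (Fin n) ℝ)
    (hSDDM : ∀ i ≤ d, IsSDDM (D i - A i))
    (hDdiag : ∀ i ≤ d, ∃ f : Fin n → ℝ, (∀ k, 0 < f k) ∧ D i = Matrix.diagonal f)
    (hAsym : ∀ i ≤ d, (A i)ᵀ = A i ∧ ∀ k l, 0 ≤ A i k l)
    (hεpos : ∀ i ≤ d, 0 ≤ ε i)
    (hchain1 : ∀ i, 1 ≤ i → i ≤ d →
      ApproxA (ε (i-1)) (D i - A i) (D (i-1) - A (i-1) * (D (i-1))⁻¹ * A (i-1)))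
    (hchain2 : ∀ i, 1 ≤ i → i ≤ d → ApproxA (ε (i-1)) (D i) (D (i-1)))
    (hchain3 : ApproxA (ε d) (D d) (D d - A d))
    (hZd : Z d = (D d)⁻¹)
    (hZ : ∀ i < d, Z i = (1/2 : ℝ) •
      ((D i)⁻¹ + (1 + (D i)⁻¹ * A i) * Z (i+1) * (1 + A i * (D i)⁻¹))) :
    ApproxA (∑ i ∈ Finset.range (d+1), ε i) (Z 0) ((D 0 - A 0)⁻¹) :=
  stmt7_general d D A ε Z hSDDM hDdiag hAsym hεpos hchain1 hchain3 hZd hZ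
end

section
/- Let M₀ = D₀ − A₀ be an SDDM matrix with standard splitting and condition number κ. If d = ⌈log₂(2 ln(2^{1/3}/(2^{1/3} − 1)) κ)⌉, then D₀ ≈_{ε_d} D₀ − D₀(D₀⁻¹A₀)^{2^d} with ε_d < (1/3) ln 2. -/
open Matrix

/-
Write `D₀ = S²` with `S = D₀^{1/2}` and normalise `B = S⁻¹ A₀ S⁻¹`, so that
`D₀ - D₀ (D₀⁻¹ A₀)^N = S (1 - B^N) S`. With `r = λ_min / λ_max = 1/κ`, the diagonal bound
`D₀ ≤ λ_max` gives `r D₀ ≤ λ_min ≤ M₀ = D₀ - A₀`; flipping the signs of the off-diagonal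
entries of `M₀ - λ_min` keeps it positive semidefinite, so also `r D₀ ≤ λ_min ≤ D₀ + A₀`.
Conjugating by `S⁻¹` yields `-(1 - r) ≤ B ≤ 1 - r`, hence `-(1 - r)^N ≤ B^N ≤ (1 - r)^N`,
and `(1 - r)^N ≤ e^{-N/κ}` is small enough for `N = 2^d`.
-/

open scoped MatrixOrder

namespace Matrix

variable {ι : Type*}

theorem diag_monotone : Monotone (diag : Matrix ι ι ℝ → ι → ℝ) := fun _ _ h i => by
  simpa using (le_iff.mp h).diag_nonneg (i := i)

variable [DecidableEq ι]

theorem smul_one_le_smul_one {a b : ℝ} (h : a ≤ b) : a • (1 : Matrix ι ι ℝ) ≤ b • 1 := by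
  rw [le_iff, ← sub_smul]
  exact PosSemidef.one.smul (sub_nonneg.mpr h)

theorem diagonal_le_smul_one {d : ι → ℝ} {c : ℝ} (h : ∀ i, d i ≤ c) : diagonal d ≤ c • 1 := by
  rw [le_iff, ← diagonal_one, ← diagonal_smul, diagonal_sub, posSemidef_diagonal_iff]
  simpa using h

variable [Fintype ι]

theorem PosSemidef.diagonal_diag_add_diagonal_diag_sub {Y : Matrix ι ι ℝ} (hY : Y.PosSemidef)
    (hoff : ∀ i j, i ≠ j → Y i j ≤ 0) : (diagonal Y.diag + (diagonal Y.diag - Y)).PosSemidef := by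
  have hherm : (diagonal Y.diag + (diagonal Y.diag - Y)).IsHermitian :=
    (isHermitian_diagonal _).add ((isHermitian_diagonal _).sub hY.1)
  refine .of_dotProduct_mulVec_nonneg hherm fun x => ?_
  -- compare the quadratic form at `x` with that of `Y` at `|x|`
  refine (hY.dotProduct_mulVec_nonneg fun i => |x i|).trans ?_
  simp only [star_trivial, dotProduct, mulVec, Finset.mul_sum]
  refine Finset.sum_le_sum fun i _ => Finset.sum_le_sum fun j _ => ?_
  rcases eq_or_ne i j with rfl | hij
  · simp only [add_apply, sub_apply, diagonal_apply_eq, diag_apply, sub_self, add_zero]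
    rw [mul_left_comm, abs_mul_abs_self, mul_left_comm]
  · simp only [add_apply, sub_apply, diagonal_apply_ne _ hij, zero_add, zero_sub]
    nlinarith [hoff i j hij, neg_abs_le (x i * x j), abs_mul (x i) (x j)]

theorem smul_one_le_diagonal_diag_add_diagonal_diag_sub {M : Matrix ι ι ℝ}
    (hoff : ∀ i j, i ≠ j → M i j ≤ 0) {c : ℝ} (hc : c • 1 ≤ M) :
    c • 1 ≤ diagonal M.diag + (diagonal M.diag - M) := by
  have hY := (le_iff.mp hc).diagonal_diag_add_diagonal_diag_sub fun i j hij => by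
    simpa [one_apply_ne hij] using hoff i j hij
  have hflip : diagonal M.diag + (diagonal M.diag - M) - c • 1 =
      diagonal (M - c • 1).diag + (diagonal (M - c • 1).diag - (M - c • 1)) := by
    ext i j
    rcases eq_or_ne i j with rfl | hij <;> simp [*]
  rw [le_iff, hflip]
  exact hY

theorem div_smul_diagonal_diag_le {M : Matrix ι ι ℝ} (hoff : ∀ i j, i ≠ j → M i j ≤ 0)
    {a b : ℝ} (ha : 0 ≤ a) (hb : 0 < b) (hlo : a • 1 ≤ M) (hhi : M ≤ b • 1) :
    (a / b) • diagonal M.diag ≤ M ∧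
      (a / b) • diagonal M.diag ≤ diagonal M.diag + (diagonal M.diag - M) := by
  have hdiag : (a / b) • diagonal M.diag ≤ a • 1 := by
    rw [← diagonal_smul]
    refine diagonal_le_smul_one fun i => ?_
    calc a / b * M i i ≤ a / b * b := by
          gcongr
          simpa using diag_monotone hhi i
      _ = a := div_mul_cancel₀ a hb.ne'
  exact ⟨hdiag.trans hlo, hdiag.trans (smul_one_le_diagonal_diag_add_diagonal_diag_sub hoff hlo)⟩

end Matrix

theorem Units.mul_self_mul_inv_mul_self_mul_pow {M : Type*} [Monoid M] (u : Mˣ) (a : M)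
    (m : ℕ) : (u * u : M) * ((↑u⁻¹ * ↑u⁻¹) * a) ^ m = u * (↑u⁻¹ * a * ↑u⁻¹) ^ m * u := by
  have hconj : (↑u⁻¹ * ↑u⁻¹) * a = ↑u⁻¹ * (↑u⁻¹ * a * ↑u⁻¹) * (u : M) := by
    simp only [mul_assoc, Units.inv_mul, mul_one]
  rw [hconj, Units.conj_pow', ← mul_assoc, ← mul_assoc, Units.mul_inv_cancel_right]

section StarOrderedRing

variable {R : Type*} [Ring R] [StarRing R] [PartialOrder R] [StarOrderedRing R] [Algebra ℝ R]

theorem IsSelfAdjoint.mul_mul_mem_Icc_algebraMap {t d a : R} (ht : IsSelfAdjoint t)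
    (htdt : t * d * t = 1) {r : ℝ} (hsub : r • d ≤ d - a) (hadd : r • d ≤ d + a) :
    t * a * t ∈ Set.Icc (algebraMap ℝ R (-(1 - r))) (algebraMap ℝ R (1 - r)) := by
  have conj_smul : t * (r • d) * t = algebraMap ℝ R r := by
    rw [mul_smul_comm, smul_mul_assoc, htdt, Algebra.algebraMap_eq_smul_one]
  have hsub' := ht.conjugate_le_conjugate hsub
  have hadd' := ht.conjugate_le_conjugate hadd
  rw [conj_smul, mul_sub, sub_mul, htdt] at hsub'
  rw [conj_smul, mul_add, add_mul, htdt] at hadd'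
  rw [map_neg, map_sub, map_one, neg_sub]
  exact ⟨sub_le_iff_le_add'.mpr hadd', le_sub_comm.mp hsub'⟩

variable [TopologicalSpace R] [ContinuousFunctionalCalculus ℝ R IsSelfAdjoint]
  [NonnegSpectrumClass ℝ R]

theorem IsSelfAdjoint.pow_mem_Icc_algebraMap {a : R} (ha : IsSelfAdjoint a) {ρ : ℝ}
    (hρ : a ∈ Set.Icc (algebraMap ℝ R (-ρ)) (algebraMap ℝ R ρ)) (m : ℕ) :
    a ^ m ∈ Set.Icc (algebraMap ℝ R (-ρ ^ m)) (algebraMap ℝ R (ρ ^ m)) := by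
  obtain ⟨hlo, hhi⟩ := hρ
  rw [algebraMap_le_iff_le_spectrum] at hlo
  rw [le_algebraMap_iff_spectrum_le] at hhi
  have habs : ∀ x ∈ spectrum ℝ a, |x ^ m| ≤ ρ ^ m := fun x hx => by
    rw [abs_pow]
    exact pow_le_pow_left₀ (abs_nonneg x) (abs_le.2 ⟨hlo x hx, hhi x hx⟩) m
  rw [← cfc_pow_id (R := ℝ) a m, Set.mem_Icc, algebraMap_le_cfc_iff (· ^ m) _ a,
    cfc_le_algebraMap_iff (· ^ m) _ a]
  exact ⟨fun x hx => neg_le_of_abs_le (habs x hx), fun x hx => le_of_abs_le (habs x hx)⟩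

end StarOrderedRing

namespace Real

theorem le_pow_ceil_logb {b x : ℝ} (hb : 1 < b) (hx : 0 < x) : x ≤ b ^ ⌈logb b x⌉₊ := by
  rw [← rpow_natCast, ← logb_le_iff_le_rpow hb hx]
  exact Nat.le_ceil _

theorem one_sub_pow_le_exp_neg_mul {r : ℝ} (hr : r ≤ 1) (N : ℕ) :
    (1 - r) ^ N ≤ exp (-(r * N)) := by
  rcases N.eq_zero_or_pos with rfl | hN
  · simp
  have hN' : (N : ℝ) ≠ 0 := by positivity
  simpa [mul_div_cancel_right₀ r hN'] using
    one_sub_div_pow_le_exp_neg (n := N) (t := r * N) (mul_le_of_le_one_left N.cast_nonneg hr)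

/-- `C = log (c / (c - 1))` is chosen so that `e^{-C} = 1 - c⁻¹`; then `r 2^d ≥ 2C > C`. -/
theorem one_sub_pow_two_pow_lt {c r κ : ℝ} (hc : 1 < c) (hr : 0 < r) (hr1 : r ≤ 1)
    (hrκ : r * κ = 1) {d : ℕ} (hd : d = ⌈logb 2 (2 * log (c / (c - 1)) * κ)⌉₊) :
    (1 - r) ^ 2 ^ d < 1 - c⁻¹ := by
  set C := log (c / (c - 1))
  have hexpC : exp (-C) = 1 - c⁻¹ := by
    rw [exp_neg, exp_log (div_pos (by linarith) (by linarith)), inv_div]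
    field_simp
  have hC : 0 < C := log_pos ((one_lt_div (by linarith)).mpr (by linarith))
  have hκ : 0 < κ := by nlinarith
  have hN : 2 * C * κ ≤ ((2 ^ d : ℕ) : ℝ) := by
    rw [hd, Nat.cast_pow, Nat.cast_ofNat]
    exact le_pow_ceil_logb one_lt_two (by positivity)
  calc (1 - r) ^ 2 ^ d ≤ exp (-(r * ((2 ^ d : ℕ) : ℝ))) := one_sub_pow_le_exp_neg_mul hr1 _
    _ < exp (-C) := by
      rw [exp_lt_exp, neg_lt_neg_iff]
      nlinarith [mul_le_mul_of_nonneg_left hN hr.le]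
    _ = 1 - c⁻¹ := hexpC

theorem neg_log_one_sub_lt_log {δ c : ℝ} (hc : 0 < c) (hδ : δ < 1 - c⁻¹) :
    -log (1 - δ) < log c := by
  have hlt : c⁻¹ < 1 - δ := by linarith
  have hpos : 0 < 1 - δ := (inv_pos.mpr hc).trans hlt
  rw [← log_inv]
  exact log_lt_log (inv_pos.mpr hpos) ((inv_lt_comm₀ hpos hc).mpr hlt)

end Real

theorem loewnerLE_iff_le {n : ℕ} {X Y : Matrix (Fin n) (Fin n) ℝ} : LoewnerLE X Y ↔ X ≤ Y :=
  Iff.rfl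

theorem approxA_mul_self_sub_mul_mul {n : ℕ} {S X : Matrix (Fin n) (Fin n) ℝ}
    (hS : IsSelfAdjoint S) {δ : ℝ} (hδ : δ < 1)
    (hX : X ∈ Set.Icc (algebraMap ℝ _ (-δ)) (algebraMap ℝ _ δ)) :
    ApproxA (-Real.log (1 - δ)) (S * S) (S * S - S * X * S) := by
  have hpos : 0 < 1 - δ := by linarith
  have conj_smul (c : ℝ) : c • (S * S) = S * (c • 1) * S := by
    rw [mul_smul_comm, mul_one, smul_mul_assoc]
  have hconj : S * S - S * X * S = S * (1 - X) * S := by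
    rw [mul_sub, sub_mul, mul_one]
  rw [Algebra.algebraMap_eq_smul_one, Algebra.algebraMap_eq_smul_one] at hX
  obtain ⟨hlo, hhi⟩ := hX
  refine ⟨loewnerLE_iff_le.mpr ?_, loewnerLE_iff_le.mpr ?_⟩
  · rw [neg_neg, Real.exp_log hpos, conj_smul, hconj]
    refine hS.conjugate_le_conjugate ?_
    rw [sub_smul, one_smul]
    exact sub_le_sub_left hhi 1
  · rw [Real.exp_neg, Real.exp_log hpos, conj_smul, hconj]
    refine hS.conjugate_le_conjugate ?_
    calc 1 - X ≤ 1 - (-δ) • 1 := sub_le_sub_left hlo 1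
      _ = (1 + δ) • 1 := by rw [add_smul, one_smul, neg_smul, sub_neg_eq_add]
      _ ≤ (1 - δ)⁻¹ • 1 := Matrix.smul_one_le_smul_one <| by
          rw [← one_div, le_div_iff₀ hpos]
          nlinarith [sq_nonneg δ]

theorem approxA_sub_mul_inv_mul_pow {n : ℕ} {D A : Matrix (Fin n) (Fin n) ℝ} (hD : D.PosDef)
    (hA : A.IsHermitian) {r : ℝ} (hsub : r • D ≤ D - A) (hadd : r • D ≤ D + A) {m : ℕ}
    (hm : (1 - r) ^ m < 1) :
    ApproxA (-Real.log (1 - (1 - r) ^ m)) D (D - D * (D⁻¹ * A) ^ m) := by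
  obtain ⟨S, hS⟩ := (CFC.isUnit_sqrt_iff D hD.posSemidef.nonneg).mpr hD.isUnit
  have hS_sa : IsSelfAdjoint (S : Matrix (Fin n) (Fin n) ℝ) :=
    hS ▸ (CFC.sqrt_nonneg D).isSelfAdjoint
  have hDS : D = S * S := by rw [hS, CFC.sqrt_mul_sqrt_self D hD.posSemidef.nonneg]
  set T : Matrix (Fin n) (Fin n) ℝ := ↑S⁻¹ with hT_def
  have hT : IsSelfAdjoint T := by
    rw [hT_def, coe_units_inv]
    exact hS_sa.isHermitian.inv.isSelfAdjoint
  have hTDT : T * D * T = 1 := by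
    rw [hT_def, hDS, ← mul_assoc, Units.inv_mul, one_mul, Units.mul_inv]
  have hDinv : D⁻¹ = T * T := by
    rw [hT_def, hDS, ← Units.val_mul, ← coe_units_inv, _root_.mul_inv_rev, Units.val_mul]
  have hB : IsSelfAdjoint (T * A * T) := by
    simpa only [hT.star_eq] using hA.isSelfAdjoint.conjugate' T
  rw [hDinv, hDS, Units.mul_self_mul_inv_mul_self_mul_pow]
  exact approxA_mul_self_sub_mul_mul hS_sa hm
    (hB.pow_mem_Icc_algebraMap (hT.mul_mul_mem_Icc_algebraMap hTDT hsub hadd) m)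

/-- For an SDDM matrix `M₀ = D₀ − A₀` with condition number `κ`, taking
`d = ⌈log₂(2 ln(2^{1/3}/(2^{1/3} − 1)) κ)⌉` gives
`D₀ ≈_{ε_d} D₀ − D₀(D₀⁻¹A₀)^{2^d}` with `ε_d < (1/3) ln 2`. -/
theorem stmt8 {n : ℕ} (M₀ D₀ A₀ : Matrix (Fin n) (Fin n) ℝ)
    (hM : IsSDDM M₀)
    (hD : D₀ = Matrix.diagonal (fun i => M₀ i i))
    (hA : A₀ = D₀ - M₀)
    (lammin lammax κ : ℝ) (hlammin : 0 < lammin)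
    (hlo : (M₀ - lammin • (1 : Matrix (Fin n) (Fin n) ℝ)).PosSemidef)
    (hhi : ((lammax • (1 : Matrix (Fin n) (Fin n) ℝ)) - M₀).PosSemidef)
    (hκ : κ = lammax / lammin)
    (d : ℕ)
    (hd : d = ⌈Real.logb 2
      (2 * Real.log ((2:ℝ) ^ ((1:ℝ)/3) / ((2:ℝ) ^ ((1:ℝ)/3) - 1)) * κ)⌉₊) :
    ∃ εd : ℝ, εd < (1/3) * Real.log 2 ∧
      ApproxA εd D₀ (D₀ - D₀ * (D₀⁻¹ * A₀) ^ (2 ^ d)) := by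
  rcases isEmpty_or_nonempty (Fin n) with hn | ⟨⟨i₀⟩⟩
  · exact ⟨0, by positivity, loewnerLE_iff_le.mpr (Subsingleton.elim _ _).le,
      loewnerLE_iff_le.mpr (Subsingleton.elim _ _).le⟩
  have hlo' : lammin • 1 ≤ M₀ := hlo
  have hhi' : M₀ ≤ lammax • 1 := hhi
  have hmin_le_max : lammin ≤ lammax := by simpa using diag_monotone (hlo'.trans hhi') i₀
  have hlammax : 0 < lammax := hlammin.trans_le hmin_le_max
  obtain ⟨hsub, hadd⟩ := div_smul_diagonal_diag_le hM.2.1 hlammin.le hlammax hlo' hhi'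
  have hδ := Real.one_sub_pow_two_pow_lt (Real.one_lt_rpow one_lt_two (by norm_num))
    (div_pos hlammin hlammax) (div_le_one_of_le₀ hmin_le_max hlammax.le)
    (by rw [hκ]; field_simp) hd
  refine ⟨_, (Real.neg_log_one_sub_lt_log (by positivity) hδ).trans_eq
    (Real.log_rpow two_pos _), ?_⟩
  subst hD hA
  refine approxA_sub_mul_inv_mul_pow (posDef_diagonal_iff.mpr fun _ => hM.1.diag_pos)
    ((isHermitian_diagonal _).sub hM.1.1) (hsub.trans_eq (sub_sub_cancel _ _).symm) hadd ?_
  linarith [inv_pos.mpr (Real.rpow_pos_of_pos two_pos ((1 : ℝ) / 3))]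
end
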